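/- arXiv:1511.09425 — 6 statements merged into one kernel-verified Lean document; each statement's English description precedes it below -/
import Mathlib

section
/- For all real numbers y ≥ x > 0, K ≥ 0, natural number k, and α > 0, there exists a polynomial P with nonnegative coefficients depending only on α and k such that x^α · (ln₊(K/x))^k ≤ y^α · P(ln₊(K/y)). -/
/-!
Put `t = log (y / x) ≥ 0`, so that `y ^ α = x ^ α * exp (α t)`. As `ln₊` is subadditive for
multiplication, `ln₊ (K / x) ≤ ln₊ (K / y) + t`, and `(a + b) ^ k ≤ 2 ^ (k - 1) (a ^ k + b ^ k)`
separates the two contributions. The term `x ^ α * t ^ k` is at most `k! / α ^ k * y ^ α` because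
`exp (α t)` dominates its Taylor term `(α t) ^ k / k!`. Hence `P = 2 ^ (k - 1) (X ^ k + k! / α ^ k)`.
-/

noncomputable def lnp (x : ℝ) : ℝ := max (Real.log x) 0

open Polynomial

lemma lnp_nonneg (x : ℝ) : 0 ≤ lnp x := le_max_right _ _

lemma lnp_of_one_le {x : ℝ} (hx : 1 ≤ x) : lnp x = Real.log x :=
  max_eq_left (Real.log_nonneg hx)

lemma lnp_mul_le (a b : ℝ) : lnp (a * b) ≤ lnp a + lnp b := by
  rcases eq_or_ne a 0 with rfl | ha
  · simp [lnp]
  rcases eq_or_ne b 0 with rfl | hb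
  · simp [lnp]
  refine max_le ?_ (add_nonneg (lnp_nonneg a) (lnp_nonneg b))
  rw [Real.log_mul ha hb]
  exact add_le_add (le_max_left _ _) (le_max_left _ _)

lemma lnp_div_le_lnp_div_add_log {x y : ℝ} (hx : 0 < x) (hxy : x ≤ y) (K : ℝ) :
    lnp (K / x) ≤ lnp (K / y) + Real.log (y / x) := by
  have hy : y ≠ 0 := (hx.trans_le hxy).ne'
  calc lnp (K / x) = lnp (K / y * (y / x)) := by rw [div_mul_div_cancel₀ hy]
    _ ≤ lnp (K / y) + lnp (y / x) := lnp_mul_le _ _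
    _ = lnp (K / y) + Real.log (y / x) := by rw [lnp_of_one_le ((one_le_div hx).2 hxy)]

lemma pow_le_factorial_div_pow_mul_exp {α : ℝ} (hα : 0 < α) (k : ℕ) {t : ℝ} (ht : 0 ≤ t) :
    t ^ k ≤ k.factorial / α ^ k * Real.exp (α * t) := by
  have h := Real.pow_div_factorial_le_exp (α * t) (by positivity) k
  rw [mul_pow, div_le_iff₀ (by positivity)] at h
  rw [div_mul_eq_mul_div, le_div_iff₀ (by positivity)]
  linarith

lemma rpow_mul_log_div_pow_le {α : ℝ} (hα : 0 < α) (k : ℕ) {x y : ℝ} (hx : 0 < x)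
    (hxy : x ≤ y) :
    x ^ α * Real.log (y / x) ^ k ≤ k.factorial / α ^ k * y ^ α := by
  set t := Real.log (y / x)
  have ht : 0 ≤ t := Real.log_nonneg ((one_le_div hx).2 hxy)
  have hy : y = x * Real.exp t := by
    rw [Real.exp_log (div_pos (hx.trans_le hxy) hx), mul_div_cancel₀ _ hx.ne']
  have hyα : y ^ α = x ^ α * Real.exp (α * t) := by
    rw [hy, Real.mul_rpow hx.le (Real.exp_pos t).le, ← Real.exp_mul, mul_comm t]
  calc x ^ α * t ^ k ≤ x ^ α * (k.factorial / α ^ k * Real.exp (α * t)) := by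
        gcongr
        exact pow_le_factorial_div_pow_mul_exp hα k ht
    _ = k.factorial / α ^ k * y ^ α := by rw [hyα]; ring

/-- Lemma (Estimating logarithms): for all `y ≥ x > 0`, `K ≥ 0`, `k : ℕ` and `α > 0` there is a
polynomial `P` with nonnegative coefficients, depending only on `α` and `k`, such that
`x^α (ln₊(K/x))^k ≤ y^α P(ln₊(K/y))`. -/
theorem rpow_mul_lnp_pow_le (α : ℝ) (hα : 0 < α) (k : ℕ) :
    ∃ P : Polynomial ℝ, (∀ n, 0 ≤ P.coeff n) ∧
      ∀ x y K : ℝ, 0 < x → x ≤ y → 0 ≤ K →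
        x ^ α * (lnp (K / x)) ^ k ≤ y ^ α * P.eval (lnp (K / y)) := by
  set c : ℝ := k.factorial / α ^ k
  refine ⟨C (2 ^ (k - 1)) * (X ^ k + C c), fun n => ?_, fun x y K hx hxy _ => ?_⟩
  · simp only [coeff_C_mul, coeff_add, coeff_X_pow, coeff_C]
    split_ifs <;> positivity
  set L := lnp (K / y)
  set t := Real.log (y / x)
  have hL : 0 ≤ L := lnp_nonneg _
  have ht : 0 ≤ t := Real.log_nonneg ((one_le_div hx).2 hxy)
  have hsplit : lnp (K / x) ^ k ≤ 2 ^ (k - 1) * (L ^ k + t ^ k) :=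
    calc lnp (K / x) ^ k ≤ (L + t) ^ k := by
          gcongr
          exacts [lnp_nonneg _, lnp_div_le_lnp_div_add_log hx hxy K]
      _ ≤ 2 ^ (k - 1) * (L ^ k + t ^ k) := add_pow_le hL ht k
  have hxyα : x ^ α ≤ y ^ α := Real.rpow_le_rpow hx.le hxy hα.le
  simp only [eval_mul, eval_C, eval_add, eval_pow, eval_X]
  calc x ^ α * lnp (K / x) ^ k ≤ x ^ α * (2 ^ (k - 1) * (L ^ k + t ^ k)) := by gcongr
    _ = 2 ^ (k - 1) * (x ^ α * L ^ k + x ^ α * t ^ k) := by ring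
    _ ≤ 2 ^ (k - 1) * (y ^ α * L ^ k + c * y ^ α) := by
        refine mul_le_mul_of_nonneg_left (add_le_add ?_ ?_) (by positivity)
        · exact mul_le_mul_of_nonneg_right hxyα (pow_nonneg hL k)
        · exact rpow_mul_log_div_pow_le hα k hx hxy
    _ = y ^ α * (2 ^ (k - 1) * (L ^ k + c)) := by ring
end

section
/- Let m > −1, 0 ≤ a₀ ≤ a₁, b, K, L > 0, c ≥ b, and k, l natural numbers. Then there exists a polynomial P with nonnegative coefficients (depending on m, k, l) such that ∫_{a₀}^{a₁} max(x,b)^m · (ln₊(K/x))^k · (ln₊(x/L))^l dx ≤ max(c,a₁)^{m+1} · P(ln₊(K/max(c,a₁)), ln₊(a₁/L)). -/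
open MeasureTheory Set Real

lemma lnp_eq_posLog : lnp = posLog := funext fun _ ↦ max_comm _ _

namespace MvPolynomial

variable (σ R : Type*) [CommSemiring R] [PartialOrder R] [IsOrderedRing R]

def nonnegCoeffs : Subsemiring (MvPolynomial σ R) where
  carrier := {p | ∀ d, 0 ≤ p.coeff d}
  mul_mem' {p q} hp hq d := by
    classical
    rw [coeff_mul]
    exact Finset.sum_nonneg fun x _ ↦ mul_nonneg (hp _) (hq _)
  one_mem' d := by
    classical
    rw [coeff_one]
    split_ifs <;> simp
  add_mem' {p q} hp hq d := by
    rw [coeff_add]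
    exact add_nonneg (hp d) (hq d)
  zero_mem' d := by simp

variable {σ R}

lemma C_mem_nonnegCoeffs {r : R} (hr : 0 ≤ r) : C r ∈ nonnegCoeffs σ R := fun d ↦ by
  classical
  rw [coeff_C]
  split_ifs <;> simp [hr]

lemma X_mem_nonnegCoeffs (i : σ) : X i ∈ nonnegCoeffs σ R := fun d ↦ by
  classical
  rw [coeff_X]
  split_ifs <;> simp

end MvPolynomial

lemma add_posLog_le_mul_rpow {a t ε : ℝ} (ha : 0 ≤ a) (ht : 1 ≤ t) (hε : 0 < ε) :
    a + log⁺ t ≤ (a + ε⁻¹) * t ^ ε := by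
  have hlog : log⁺ t ≤ ε⁻¹ * t ^ ε := by
    rw [posLog_eq_log (by rwa [abs_of_nonneg (by linarith)]), inv_mul_eq_div]
    exact log_le_rpow_div (by linarith) hε
  have hone : 1 ≤ t ^ ε := one_le_rpow ht hε.le
  nlinarith

lemma add_posLog_pow_le_mul_rpow {a t δ : ℝ} (ha : 0 ≤ a) (ht : 1 ≤ t) (hδ : 0 < δ) (k : ℕ) :
    (a + log⁺ t) ^ k ≤ (a + k / δ) ^ k * t ^ δ := by
  rcases Nat.eq_zero_or_pos k with rfl | hk
  · simpa using one_le_rpow ht hδ.le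
  have hε : 0 < δ / k := by positivity
  calc (a + log⁺ t) ^ k ≤ ((a + (δ / k)⁻¹) * t ^ (δ / k)) ^ k :=
        pow_le_pow_left₀ (add_nonneg ha posLog_nonneg) (add_posLog_le_mul_rpow ha ht hε) k
    _ = (a + k / δ) ^ k * t ^ δ := by
        rw [mul_pow, ← rpow_mul_natCast (by linarith), inv_div, div_mul_cancel₀ _ (by positivity)]

lemma max_rpow_le_rpow_add_rpow {x b M m : ℝ} (hx : 0 < x) (hxM : x ≤ M) (hb : 0 < b)
    (hbM : b ≤ M) : max x b ^ m ≤ x ^ m + M ^ m := by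
  have hx' : 0 ≤ x ^ m := rpow_nonneg hx.le m
  have hM' : 0 ≤ M ^ m := rpow_nonneg (hx.le.trans hxM) m
  rcases le_or_gt 0 m with hm | hm
  · linarith [rpow_le_rpow (hb.le.trans (le_max_right x b)) (max_le hxM hbM) hm]
  · linarith [rpow_le_rpow_of_nonpos hx (le_max_left x b) hm.le]

lemma integral_rpow_le {p a₀ a₁ M : ℝ} (hp : -1 < p) (h0 : 0 ≤ a₀) (h01 : a₀ ≤ a₁)
    (h1M : a₁ ≤ M) : ∫ x in a₀..a₁, x ^ p ≤ M ^ (p + 1) / (p + 1) := by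
  rw [integral_rpow (Or.inl hp)]
  have hp1 : 0 < p + 1 := by linarith
  have h1 : 0 ≤ a₀ ^ (p + 1) := rpow_nonneg h0 _
  have h2 : a₁ ^ (p + 1) ≤ M ^ (p + 1) := rpow_le_rpow (h0.trans h01) h1M hp1.le
  gcongr
  linarith

lemma integral_mono_of_nonneg_on_Ioc {f g : ℝ → ℝ} {a b : ℝ} (hab : a ≤ b)
    (hf : ∀ x ∈ Ioc a b, 0 ≤ f x) (hg : IntervalIntegrable g volume a b)
    (hfg : ∀ x ∈ Ioc a b, f x ≤ g x) : ∫ x in a..b, f x ≤ ∫ x in a..b, g x := by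
  rw [intervalIntegral.integral_of_le hab, intervalIntegral.integral_of_le hab]
  exact integral_mono_of_nonneg ((ae_restrict_iff' measurableSet_Ioc).2 (.of_forall hf)) hg.1
    ((ae_restrict_iff' measurableSet_Ioc).2 (.of_forall hfg))

section PowerMajorant

variable {m δ M a₀ a₁ : ℝ}

lemma intervalIntegrable_rpow_sub_add_rpow_neg (hδm : δ < m + 1) (hδ1 : δ < 1) :
    IntervalIntegrable (fun x ↦ M ^ δ * x ^ (m - δ) + M ^ (m + δ) * x ^ (-δ)) volume a₀ a₁ :=
  ((intervalIntegral.intervalIntegrable_rpow' (by linarith)).const_mul _).add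
    ((intervalIntegral.intervalIntegrable_rpow' (by linarith)).const_mul _)

lemma integral_rpow_sub_add_rpow_neg_le (hδm : δ < m + 1) (hδ1 : δ < 1) (h0 : 0 ≤ a₀)
    (h01 : a₀ ≤ a₁) (h1M : a₁ ≤ M) (hM : 0 < M) :
    ∫ x in a₀..a₁, (M ^ δ * x ^ (m - δ) + M ^ (m + δ) * x ^ (-δ))
      ≤ (1 / (m + 1 - δ) + 1 / (1 - δ)) * M ^ (m + 1) := by
  have hp : -1 < m - δ := by linarith
  have hq : -1 < -δ := by linarith
  rw [intervalIntegral.integral_add ((intervalIntegral.intervalIntegrable_rpow' hp).const_mul _)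
      ((intervalIntegral.intervalIntegrable_rpow' hq).const_mul _),
    intervalIntegral.integral_const_mul, intervalIntegral.integral_const_mul]
  have h1 := integral_rpow_le hp h0 h01 h1M
  have h2 := integral_rpow_le hq h0 h01 h1M
  calc M ^ δ * (∫ x in a₀..a₁, x ^ (m - δ)) + M ^ (m + δ) * ∫ x in a₀..a₁, x ^ (-δ)
      ≤ M ^ δ * (M ^ (m - δ + 1) / (m - δ + 1)) + M ^ (m + δ) * (M ^ (-δ + 1) / (-δ + 1)) := by
        gcongr
    _ = (1 / (m + 1 - δ) + 1 / (1 - δ)) * M ^ (m + 1) := by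
        rw [mul_div_assoc', mul_div_assoc', ← rpow_add hM, ← rpow_add hM]
        ring_nf

end PowerMajorant

lemma max_rpow_mul_posLog_pow_mul_posLog_pow_le {m δ b K L M x a₁ : ℝ} (k l : ℕ) (hδ : 0 < δ)
    (hb : 0 < b) (hbM : b ≤ M) (hx : 0 < x) (hxa : x ≤ a₁) (haM : a₁ ≤ M) (hL : 0 < L) :
    max x b ^ m * log⁺ (K / x) ^ k * log⁺ (x / L) ^ l
      ≤ (log⁺ (K / M) + k / δ) ^ k * log⁺ (a₁ / L) ^ l *
        (M ^ δ * x ^ (m - δ) + M ^ (m + δ) * x ^ (-δ)) := by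
  have hM : 0 < M := hb.trans_le hbM
  have hxM : x ≤ M := hxa.trans haM
  have hmax : max x b ^ m ≤ x ^ m + M ^ m := max_rpow_le_rpow_add_rpow hx hxM hb hbM
  have hKx : log⁺ (K / x) ^ k ≤ (log⁺ (K / M) + k / δ) ^ k * (M / x) ^ δ := by
    calc log⁺ (K / x) ^ k ≤ (log⁺ (K / M) + log⁺ (M / x)) ^ k := by
          gcongr
          · exact posLog_nonneg
          · calc log⁺ (K / x) = log⁺ (K / M * (M / x)) := by field_simp
              _ ≤ _ := posLog_mul
      _ ≤ _ := add_posLog_pow_le_mul_rpow posLog_nonneg ((one_le_div hx).2 hxM) hδ k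
  have hxL : log⁺ (x / L) ^ l ≤ log⁺ (a₁ / L) ^ l := by
    gcongr
    exact posLog_nonneg
  have hsplit : (x ^ m + M ^ m) * (M / x) ^ δ = M ^ δ * x ^ (m - δ) + M ^ (m + δ) * x ^ (-δ) := by
    rw [div_rpow hM.le hx.le, rpow_sub hx, rpow_add hM, rpow_neg hx.le]
    field_simp
  have hA : 0 ≤ log⁺ (K / M) + k / δ := add_nonneg posLog_nonneg (by positivity)
  calc max x b ^ m * log⁺ (K / x) ^ k * log⁺ (x / L) ^ l
      ≤ (x ^ m + M ^ m) * ((log⁺ (K / M) + k / δ) ^ k * (M / x) ^ δ) * log⁺ (a₁ / L) ^ l := by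
        gcongr
        · exact pow_nonneg posLog_nonneg l
        · exact pow_nonneg posLog_nonneg k
    _ = _ := by rw [← hsplit]; ring

lemma integral_max_rpow_mul_posLog_pow_mul_posLog_pow_le {m δ a₀ a₁ b K L M : ℝ} (k l : ℕ)
    (hδ : 0 < δ) (hδm : δ < m + 1) (hδ1 : δ < 1) (h0 : 0 ≤ a₀) (h01 : a₀ ≤ a₁) (hb : 0 < b)
    (hL : 0 < L) (hbM : b ≤ M) (h1M : a₁ ≤ M) :
    ∫ x in a₀..a₁, max x b ^ m * log⁺ (K / x) ^ k * log⁺ (x / L) ^ l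
      ≤ M ^ (m + 1) *
        ((1 / (m + 1 - δ) + 1 / (1 - δ)) * (log⁺ (K / M) + k / δ) ^ k * log⁺ (a₁ / L) ^ l) := by
  set c := (log⁺ (K / M) + k / δ) ^ k * log⁺ (a₁ / L) ^ l
  have hc : 0 ≤ c :=
    mul_nonneg (pow_nonneg (add_nonneg posLog_nonneg (by positivity)) k)
      (pow_nonneg posLog_nonneg l)
  calc ∫ x in a₀..a₁, max x b ^ m * log⁺ (K / x) ^ k * log⁺ (x / L) ^ l
      ≤ ∫ x in a₀..a₁, c * (M ^ δ * x ^ (m - δ) + M ^ (m + δ) * x ^ (-δ)) := by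
        refine integral_mono_of_nonneg_on_Ioc h01 (fun x _ ↦ ?_)
          ((intervalIntegrable_rpow_sub_add_rpow_neg hδm hδ1).const_mul _)
          (fun x hx ↦ max_rpow_mul_posLog_pow_mul_posLog_pow_le k l hδ hb hbM (h0.trans_lt hx.1)
            hx.2 h1M hL)
        exact mul_nonneg (mul_nonneg (rpow_nonneg (hb.le.trans (le_max_right _ _)) _)
          (pow_nonneg posLog_nonneg _)) (pow_nonneg posLog_nonneg _)
    _ ≤ c * ((1 / (m + 1 - δ) + 1 / (1 - δ)) * M ^ (m + 1)) := by
        rw [intervalIntegral.integral_const_mul]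
        exact mul_le_mul_of_nonneg_left
          (integral_rpow_sub_add_rpow_neg_le hδm hδ1 h0 h01 h1M (hb.trans_le hbM)) hc
    _ = _ := by ring

/-- Lemma (Λ integration, part 2): for `m > −1`, `k, l : ℕ`, there is a polynomial `P` in two
variables with nonnegative coefficients (depending on `m, k, l`) such that for all
`0 ≤ a₀ ≤ a₁`, `b, K, L > 0` and `c ≥ b`,
`∫_{a₀}^{a₁} max(x,b)^m (ln₊(K/x))^k (ln₊(x/L))^l dx
  ≤ max(c,a₁)^{m+1} · P(ln₊(K/max(c,a₁)), ln₊(a₁/L))`. -/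
theorem lambda_integration_two (m : ℝ) (hm : -1 < m) (k l : ℕ) :
    ∃ P : MvPolynomial (Fin 2) ℝ, (∀ d, 0 ≤ P.coeff d) ∧
      ∀ a₀ a₁ b c K L : ℝ, 0 ≤ a₀ → a₀ ≤ a₁ → 0 < b → 0 < K → 0 < L → b ≤ c →
        (∫ x in a₀..a₁, (max x b) ^ m * (lnp (K / x)) ^ k * (lnp (x / L)) ^ l)
          ≤ (max c a₁) ^ (m + 1) *
            MvPolynomial.eval ![lnp (K / max c a₁), lnp (a₁ / L)] P := by
  obtain ⟨δ, hδ, hδm, hδ1⟩ : ∃ δ, 0 < δ ∧ δ < m + 1 ∧ δ < 1 := by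
    obtain ⟨δ, hδ, hδmin⟩ := exists_between (lt_min (neg_lt_iff_pos_add.1 hm) one_pos)
    exact ⟨δ, hδ, lt_min_iff.1 hδmin⟩
  open MvPolynomial in
  refine ⟨C (1 / (m + 1 - δ) + 1 / (1 - δ)) * (X 0 + C (k / δ)) ^ k * X 1 ^ l, ?_, ?_⟩
  · have hC₀ : 0 ≤ 1 / (m + 1 - δ) + 1 / (1 - δ) :=
      add_nonneg (one_div_nonneg.2 (by linarith)) (one_div_nonneg.2 (by linarith))
    exact mul_mem (mul_mem (C_mem_nonnegCoeffs hC₀)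
      (pow_mem (add_mem (X_mem_nonnegCoeffs 0) (C_mem_nonnegCoeffs (by positivity))) k))
      (pow_mem (X_mem_nonnegCoeffs 1) l)
  intro a₀ a₁ b c K L h0 h01 hb _ hL hbc
  simpa [lnp_eq_posLog] using integral_max_rpow_mul_posLog_pow_mul_posLog_pow_le k l hδ hδm hδ1
    h0 h01 hb hL (hbc.trans (le_max_left c a₁)) (le_max_right c a₁)
end

section
/- For a ≥ 0 and vectors u, v ∈ ℝ⁴, there exists a polynomial P with nonnegative coefficients (independent of a, u, v) such that ∫₀¹ |v|/(a + |u + t·v|) dt ≤ P(ln₊(|v|/a)), where for a = 0 the right-hand side is interpreted via the convention ln₊(|v|/0) = ∞ or one restricts to a > 0. -/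
/-! Projecting `u + t • v` onto the direction of `v` gives `‖u + t • v‖ ≥ |c + t‖v‖|` with
`c = ⟪u, v⟫ / ‖v‖`. After rescaling to `a = 1`, and since `√(1 + s²) ≤ 1 + |s|`, the integrand is
at most `‖v‖ / √(1 + (c + t‖v‖)²)`, whose integral is the increment of `arsinh` over an interval of
length `‖v‖`. Subadditivity of `arsinh` on `[0, ∞)` bounds this increment by
`2 arsinh ‖v‖ ≤ 2 log 3 + 2 ln₊ ‖v‖`. -/

open Real

namespace Real

theorem sqrt_one_add_sq_le_one_add_abs (x : ℝ) : √(1 + x ^ 2) ≤ 1 + |x| := by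
  rw [sqrt_le_left (by positivity)]
  nlinarith [sq_abs x, abs_nonneg x]

theorem arsinh_add_le_add {x y : ℝ} (hx : 0 ≤ x) (hy : 0 ≤ y) :
    arsinh (x + y) ≤ arsinh x + arsinh y := by
  -- `sinh (A + B) = x cosh B + y cosh A ≥ x + y` for `A = arsinh x`, `B = arsinh y`
  rw [← arsinh_sinh (arsinh x + arsinh y), arsinh_le_arsinh, sinh_add, sinh_arsinh, sinh_arsinh]
  nlinarith [one_le_cosh (arsinh x), one_le_cosh (arsinh y)]

theorem arsinh_add_sub_arsinh_le (x : ℝ) {d : ℝ} (hd : 0 ≤ d) :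
    arsinh (x + d) - arsinh x ≤ 2 * arsinh d := by
  have hd' : 0 ≤ arsinh d := arsinh_nonneg_iff.mpr hd
  rcases le_total 0 x with hx | hx
  · linarith [arsinh_add_le_add hx hd]
  rcases le_total (x + d) 0 with hxd | hxd
  · have := arsinh_add_le_add (neg_nonneg.mpr hxd) hd
    rw [show -(x + d) + d = -x by ring, arsinh_neg, arsinh_neg] at this
    linarith
  · have h₁ : arsinh (x + d) ≤ arsinh d := arsinh_le_arsinh.mpr (by linarith)
    have h₂ : arsinh (-x) ≤ arsinh d := arsinh_le_arsinh.mpr (by linarith)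
    rw [arsinh_neg] at h₂
    linarith

theorem arsinh_le_log_three_add_lnp {d : ℝ} (hd : 0 ≤ d) : arsinh d ≤ log 3 + lnp d := by
  have h : arsinh d ≤ log (1 + 2 * d) :=
    log_le_log (by positivity) (by linarith [sqrt_one_add_sq_le_one_add_abs d, abs_of_nonneg hd])
  rcases le_total d 1 with hd1 | hd1
  · calc arsinh d ≤ log 3 := h.trans (log_le_log (by positivity) (by linarith))
      _ ≤ log 3 + lnp d := le_add_of_nonneg_right (le_max_right _ _)
  · calc arsinh d ≤ log (3 * d) := h.trans (log_le_log (by positivity) (by linarith))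
      _ = log 3 + log d := log_mul (by norm_num) (by positivity)
      _ ≤ log 3 + lnp d := by gcongr; exact le_max_left _ _

theorem integral_inv_sqrt_one_add_sq_affine (x d : ℝ) :
    ∫ t in (0 : ℝ)..1, (√(1 + (x + t * d) ^ 2))⁻¹ * d = arsinh (x + d) - arsinh x := by
  have hderiv (t : ℝ) : HasDerivAt (fun t => arsinh (x + t * d))
      ((√(1 + (x + t * d) ^ 2))⁻¹ * d) t := by
    simpa using (((hasDerivAt_id t).mul_const d).const_add x).arsinh
  have hcont : Continuous fun t : ℝ => (√(1 + (x + t * d) ^ 2))⁻¹ * d := by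
    fun_prop (disch := intro t; positivity)
  rw [intervalIntegral.integral_eq_sub_of_hasDerivAt (fun t _ => hderiv t)
    (hcont.intervalIntegrable 0 1)]
  simp

end Real

section InnerProductSpace

variable {E : Type*} [NormedAddCommGroup E] [InnerProductSpace ℝ E]

theorem abs_inner_div_norm_add_mul_norm_le_norm_add_smul (u v : E) (t : ℝ) :
    |inner ℝ u v / ‖v‖ + t * ‖v‖| ≤ ‖u + t • v‖ := by
  rcases eq_or_ne v 0 with rfl | hv
  · simp
  have hv' : 0 < ‖v‖ := norm_pos_iff.mpr hv
  have : inner ℝ u v / ‖v‖ + t * ‖v‖ = inner ℝ (u + t • v) v / ‖v‖ := by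
    rw [inner_add_left, real_inner_smul_left, real_inner_self_eq_norm_sq]
    field_simp
  rw [this, abs_div, abs_norm, div_le_iff₀ hv']
  exact abs_real_inner_le_norm _ _

theorem integral_norm_div_one_add_norm_add_smul_le (u v : E) :
    ∫ t in (0 : ℝ)..1, ‖v‖ / (1 + ‖u + t • v‖) ≤ 2 * arsinh ‖v‖ := by
  set c := inner ℝ u v / ‖v‖
  have hpt (t : ℝ) : ‖v‖ / (1 + ‖u + t • v‖) ≤ (√(1 + (c + t * ‖v‖) ^ 2))⁻¹ * ‖v‖ := by
    rw [inv_mul_eq_div]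
    refine div_le_div_of_nonneg_left (norm_nonneg v) (by positivity) ?_
    linarith [sqrt_one_add_sq_le_one_add_abs (c + t * ‖v‖),
      abs_inner_div_norm_add_mul_norm_le_norm_add_smul u v t]
  have hcont : Continuous fun t : ℝ => ‖v‖ / (1 + ‖u + t • v‖) :=
    continuous_const.div (by fun_prop) fun t => by positivity
  calc ∫ t in (0 : ℝ)..1, ‖v‖ / (1 + ‖u + t • v‖)
      ≤ ∫ t in (0 : ℝ)..1, (√(1 + (c + t * ‖v‖) ^ 2))⁻¹ * ‖v‖ := by
        refine intervalIntegral.integral_mono_on zero_le_one (hcont.intervalIntegrable 0 1)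
          ?_ fun t _ => hpt t
        exact (by fun_prop (disch := intro t; positivity) :
          Continuous fun t : ℝ => (√(1 + (c + t * ‖v‖) ^ 2))⁻¹ * ‖v‖).intervalIntegrable 0 1
    _ = arsinh (c + ‖v‖) - arsinh c := integral_inv_sqrt_one_add_sq_affine c ‖v‖
    _ ≤ 2 * arsinh ‖v‖ := arsinh_add_sub_arsinh_le c (norm_nonneg v)

theorem integral_norm_div_add_norm_add_smul_le {a : ℝ} (ha : 0 < a) (u v : E) :
    ∫ t in (0 : ℝ)..1, ‖v‖ / (a + ‖u + t • v‖) ≤ 2 * arsinh (‖v‖ / a) := by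
  have hscale (t : ℝ) : ‖v‖ / (a + ‖u + t • v‖) = ‖a⁻¹ • v‖ / (1 + ‖a⁻¹ • u + t • a⁻¹ • v‖) := by
    rw [smul_comm t, ← smul_add, norm_smul, norm_smul, Real.norm_of_nonneg (inv_nonneg.mpr ha.le)]
    field_simp
  simp_rw [hscale]
  convert integral_norm_div_one_add_norm_add_smul_le (a⁻¹ • u) (a⁻¹ • v) using 3
  rw [norm_smul, Real.norm_of_nonneg (inv_nonneg.mpr ha.le), inv_mul_eq_div]

end InnerProductSpace

open Polynomial in
/-- Lemma (Slaloms): there is a polynomial `P` with nonnegative coefficients, independent of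
`a, u, v`, such that for all `a > 0` and `u, v ∈ ℝ⁴`,
`∫₀¹ |v|/(a + |u + t·v|) dt ≤ P(ln₊(|v|/a))`. -/
theorem slalom_estimate :
    ∃ P : Polynomial ℝ, (∀ n, 0 ≤ P.coeff n) ∧
      ∀ (a : ℝ) (u v : EuclideanSpace ℝ (Fin 4)), 0 < a →
        (∫ t in (0:ℝ)..1, ‖v‖ / (a + ‖u + t • v‖)) ≤ P.eval (lnp (‖v‖ / a)) := by
  refine ⟨C (2 * log 3) + C 2 * X, fun n => ?_, fun a u v ha => ?_⟩
  · have hlog3 := log_nonneg (by norm_num : (1 : ℝ) ≤ 3)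
    rcases n with _ | _ | n <;> simp [coeff_C, coeff_X, hlog3]
  calc ∫ t in (0:ℝ)..1, ‖v‖ / (a + ‖u + t • v‖)
      ≤ 2 * arsinh (‖v‖ / a) := integral_norm_div_add_norm_add_smul_le ha u v
    _ ≤ 2 * (log 3 + lnp (‖v‖ / a)) := by
        gcongr; exact arsinh_le_log_three_add_lnp (by positivity)
    _ = _ := by simp; ring
end

section
/- In the slalom estimate, if |u| ≥ |v| and a > 0, then ∫₀¹ |v|/(a + |u + t·v|) dt ≤ ln(1 + |v|/a). -/
/-!
On `[0, 1]` the reverse triangle inequality and `‖v‖ ≤ ‖u‖` give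
`‖u + t • v‖ ≥ ‖u‖ - t‖v‖ ≥ (1 - t)‖v‖`, so the integrand is dominated by `‖v‖ / (a + (1 - t)‖v‖)`,
whose integral over `[0, 1]` is exactly `log (1 + ‖v‖ / a)`.
-/

open Real Set intervalIntegral

lemma one_sub_mul_norm_le_norm_add_smul {E : Type*} [SeminormedAddCommGroup E] [NormedSpace ℝ E]
    {u v : E} (h : ‖v‖ ≤ ‖u‖) {t : ℝ} (ht : t ∈ Icc (0 : ℝ) 1) :
    (1 - t) * ‖v‖ ≤ ‖u + t • v‖ :=
  calc (1 - t) * ‖v‖ ≤ ‖u‖ - ‖t • v‖ := by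
        rw [norm_smul, Real.norm_of_nonneg ht.1]; nlinarith [ht.1]
    _ ≤ ‖u + t • v‖ := norm_sub_le_norm_add u (t • v)

lemma integral_div_add_mul_eq_log {a c : ℝ} (ha : 0 < a) (hc : 0 ≤ c) :
    ∫ s in (0 : ℝ)..1, c / (a + c * s) = log (1 + c / a) := by
  have hpos : ∀ s ∈ uIcc (0 : ℝ) 1, 0 < a + c * s := fun s hs => by
    rw [uIcc_of_le zero_le_one] at hs; nlinarith [hs.1]
  have hderiv : ∀ s ∈ uIcc (0 : ℝ) 1, HasDerivAt (fun s => log (a + c * s)) (c / (a + c * s)) s :=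
    fun s hs => by
      simpa using (((hasDerivAt_id s).const_mul c).const_add a).log (hpos s hs).ne'
  have hcont : ContinuousOn (fun s => c / (a + c * s)) (uIcc 0 1) :=
    continuousOn_const.div (by fun_prop) fun s hs => (hpos s hs).ne'
  rw [integral_eq_sub_of_hasDerivAt hderiv hcont.intervalIntegrable, mul_one, mul_zero, add_zero,
    ← log_div (by positivity) ha.ne', add_div, div_self ha.ne']

lemma integral_div_add_norm_add_smul_le_log {E : Type*} [SeminormedAddCommGroup E]
    [NormedSpace ℝ E] {a : ℝ} (ha : 0 < a) {u v : E} (h : ‖v‖ ≤ ‖u‖) :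
    ∫ t in (0 : ℝ)..1, ‖v‖ / (a + ‖u + t • v‖) ≤ log (1 + ‖v‖ / a) := by
  have hpos : ∀ t ∈ Icc (0 : ℝ) 1, 0 < a + ‖v‖ * (1 - t) := fun t ht => by
    nlinarith [norm_nonneg v, ht.2]
  have hcont : ContinuousOn (fun t => ‖v‖ / (a + ‖v‖ * (1 - t))) (Icc 0 1) :=
    continuousOn_const.div (by fun_prop) fun t ht => (hpos t ht).ne'
  calc ∫ t in (0 : ℝ)..1, ‖v‖ / (a + ‖u + t • v‖)
      ≤ ∫ t in (0 : ℝ)..1, ‖v‖ / (a + ‖v‖ * (1 - t)) := by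
        refine integral_mono_on zero_le_one ?_ (hcont.intervalIntegrable_of_Icc zero_le_one)
          fun t ht => ?_
        · exact (continuous_const.div (by fun_prop) fun t => by positivity).intervalIntegrable 0 1
        · have := one_sub_mul_norm_le_norm_add_smul h ht
          gcongr
          · exact hpos t ht
          · linarith
    _ = ∫ s in (0 : ℝ)..1, ‖v‖ / (a + ‖v‖ * s) := by
        simpa using integral_comp_sub_left (fun s => ‖v‖ / (a + ‖v‖ * s)) (a := 0) (b := 1) (1 : ℝ)
    _ = log (1 + ‖v‖ / a) := integral_div_add_mul_eq_log ha (norm_nonneg v)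

/-- In the slalom estimate, if `|u| ≥ |v|` and `a > 0`, then
`∫₀¹ |v|/(a + |u + t·v|) dt ≤ ln(1 + |v|/a)`. -/
theorem slalom_estimate_large_u (a : ℝ) (ha : 0 < a)
    (u v : EuclideanSpace ℝ (Fin 4)) (h : ‖v‖ ≤ ‖u‖) :
    (∫ t in (0:ℝ)..1, ‖v‖ / (a + ‖u + t • v‖)) ≤ Real.log (1 + ‖v‖ / a) :=
  integral_div_add_norm_add_smul_le_log ha h
end

section
/- Let f : ℝ⁴ → [0,∞) be measurable with ∫ exp(−α|x|²) f(x)·max(|x|,1)^m dx < ∞ for all α > 0. Then for any a ∈ ℝ⁴, β ≥ 1, integer m ≥ 0, and α > 0, there exists a constant c (depending on α, β, m, f but not on a) such that ∫ exp(−α|x|²) f(x) · max(|x + a|, β)^{−m} dx ≤ c · max(|a|, β)^{−m}. -/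
/-! With `u = max ‖x‖ 1` and `v = max ‖x + a‖ β`, both at least `1`, the triangle inequality gives
`max ‖a‖ β ≤ u + v ≤ 2 u v`. Hence the integrand is bounded by `2 ^ m * max(‖a‖, β) ^ (-m)` times
the integrable weight `exp (-α ‖x‖²) f x max(‖x‖, 1) ^ m`. -/

open MeasureTheory

section Peetre

variable {E : Type*} [NormedAddCommGroup E]

lemma max_norm_le_two_mul_max_mul_max (a x : E) {β : ℝ} (hβ : 1 ≤ β) :
    max ‖a‖ β ≤ 2 * max ‖x‖ 1 * max ‖x + a‖ β := by
  have hu : 1 ≤ max ‖x‖ 1 := le_max_right _ _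
  have hv : β ≤ max ‖x + a‖ β := le_max_right _ _
  have ha : ‖a‖ ≤ max ‖x‖ 1 + max ‖x + a‖ β :=
    calc ‖a‖ = ‖(x + a) - x‖ := by rw [add_sub_cancel_left]
      _ ≤ ‖x + a‖ + ‖x‖ := norm_sub_le _ _
      _ ≤ max ‖x‖ 1 + max ‖x + a‖ β := by linarith [le_max_left ‖x‖ 1, le_max_left ‖x + a‖ β]
  exact max_le (by nlinarith) (by nlinarith)

lemma inv_max_norm_add_pow_le (a x : E) {β : ℝ} (hβ : 1 ≤ β) (m : ℕ) :
    ((max ‖x + a‖ β) ^ m)⁻¹ ≤ 2 ^ m * (max ‖x‖ 1) ^ m * ((max ‖a‖ β) ^ m)⁻¹ := by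
  have hβ0 : 0 < β := zero_lt_one.trans_le hβ
  have hv : 0 < max ‖x + a‖ β := hβ0.trans_le (le_max_right _ _)
  have hw : 0 < max ‖a‖ β := hβ0.trans_le (le_max_right _ _)
  have hpow : (max ‖a‖ β) ^ m ≤ 2 ^ m * (max ‖x‖ 1) ^ m * (max ‖x + a‖ β) ^ m := by
    rw [← mul_pow, ← mul_pow]
    exact pow_le_pow_left₀ hw.le (max_norm_le_two_mul_max_mul_max a x hβ) m
  rw [← div_eq_mul_inv, le_div_iff₀ (by positivity), inv_mul_eq_div, div_le_iff₀ (by positivity)]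
  exact hpow

variable [MeasurableSpace E] {μ : Measure E}

lemma integral_mul_inv_max_norm_add_pow_le {g : E → ℝ} (hg : ∀ x, 0 ≤ g x) {m : ℕ}
    (hint : Integrable (fun x => g x * (max ‖x‖ 1) ^ m) μ) {β : ℝ} (hβ : 1 ≤ β) (a : E) :
    ∫ x, g x * ((max ‖x + a‖ β) ^ m)⁻¹ ∂μ
      ≤ 2 ^ m * (∫ x, g x * (max ‖x‖ 1) ^ m ∂μ) * ((max ‖a‖ β) ^ m)⁻¹ := by
  have hβ0 : 0 < β := zero_lt_one.trans_le hβ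
  have hbound : ∀ x, g x * ((max ‖x + a‖ β) ^ m)⁻¹
      ≤ 2 ^ m * ((max ‖a‖ β) ^ m)⁻¹ * (g x * (max ‖x‖ 1) ^ m) := fun x =>
    calc g x * ((max ‖x + a‖ β) ^ m)⁻¹
        ≤ g x * (2 ^ m * (max ‖x‖ 1) ^ m * ((max ‖a‖ β) ^ m)⁻¹) :=
          mul_le_mul_of_nonneg_left (inv_max_norm_add_pow_le a x hβ m) (hg x)
      _ = 2 ^ m * ((max ‖a‖ β) ^ m)⁻¹ * (g x * (max ‖x‖ 1) ^ m) := by ring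
  calc ∫ x, g x * ((max ‖x + a‖ β) ^ m)⁻¹ ∂μ
      ≤ ∫ x, 2 ^ m * ((max ‖a‖ β) ^ m)⁻¹ * (g x * (max ‖x‖ 1) ^ m) ∂μ := by
        refine integral_mono_of_nonneg (.of_forall fun x => ?_) (hint.const_mul _)
          (.of_forall hbound)
        have := hg x
        have : 0 < max ‖x + a‖ β := hβ0.trans_le (le_max_right _ _)
        positivity
    _ = 2 ^ m * (∫ x, g x * (max ‖x‖ 1) ^ m ∂μ) * ((max ‖a‖ β) ^ m)⁻¹ := by
        rw [integral_const_mul]; ring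

end Peetre

theorem p_integration_neg_general (f : EuclideanSpace ℝ (Fin 4) → ℝ)
    (hf0 : ∀ x, 0 ≤ f x) (m : ℕ)
    (hint : ∀ α : ℝ, 0 < α →
      Integrable (fun x => Real.exp (-α * ‖x‖ ^ 2) * f x * (max ‖x‖ 1) ^ m))
    (α β : ℝ) (hα : 0 < α) (hβ : 1 ≤ β) :
    ∃ c : ℝ, ∀ a : EuclideanSpace ℝ (Fin 4),
      (∫ x, Real.exp (-α * ‖x‖ ^ 2) * f x * ((max ‖x + a‖ β) ^ m)⁻¹)
        ≤ c * ((max ‖a‖ β) ^ m)⁻¹ :=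
  ⟨_, integral_mul_inv_max_norm_add_pow_le (fun x => mul_nonneg (Real.exp_pos _).le (hf0 x))
    (hint α hα) hβ⟩

/-- Lemma (p integration, negative powers): let `f : ℝ⁴ → [0,∞)` be measurable with
`∫ exp(−α|x|²) f(x) max(|x|,1)^m dx < ∞` for all `α > 0`.  Then for any `a ∈ ℝ⁴`, `β ≥ 1`,
`m : ℕ` and `α > 0`, there is a constant `c` (independent of `a`) such that
`∫ exp(−α|x|²) f(x) max(|x+a|,β)^{−m} dx ≤ c · max(|a|,β)^{−m}`. -/
theorem p_integration_neg (f : EuclideanSpace ℝ (Fin 4) → ℝ)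
    (hf : Measurable f) (hf0 : ∀ x, 0 ≤ f x) (m : ℕ)
    (hint : ∀ α : ℝ, 0 < α →
      Integrable (fun x => Real.exp (-α * ‖x‖ ^ 2) * f x * (max ‖x‖ 1) ^ m))
    (α β : ℝ) (hα : 0 < α) (hβ : 1 ≤ β) :
    ∃ c : ℝ, ∀ a : EuclideanSpace ℝ (Fin 4),
      (∫ x, Real.exp (-α * ‖x‖ ^ 2) * f x * ((max ‖x + a‖ β) ^ m)⁻¹)
        ≤ c * ((max ‖a‖ β) ^ m)⁻¹ :=
  p_integration_neg_general f hf0 m hint α β hα hβ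
end

section
/- Van der Corput type consequence: for ν > 1 and real x ≠ 0 and real P, the oscillatory integral satisfies |∫₀^P exp(−i·x·sgn(τ)·|τ|^ν) dτ| ≤ 4·|x|^{−1/ν}. -/
/-!
Substituting `τ = |x|^{-1/ν} t` turns the integral into `|x|^{-1/ν} ∫₀^Q exp(-i sgn t |t|^ν) dt`.
Complex conjugation absorbs the sign of `x`, and since the phase `sgn t |t|^ν` is odd, also the
sign of `Q`; on `[0, Q]` the phase is `t^ν`. The integral over `[0, 1]` is at most `1`. On `[1, Q]`
we have `φ' = ν t^{ν-1} ≥ ν` increasing, and van der Corput's lemma gives `3 / ν`: writing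
`e^{-iφ} = u (e^{-iφ})'` with `u = i / φ'` and integrating by parts, the boundary terms are at most
`1 / ν` each and the remaining integral is at most `∫ (1/φ')' ≤ 1 / ν`.
-/

open MeasureTheory intervalIntegral Complex Set
open scoped ComplexConjugate

lemma Real.sign_mul_of_pos {c : ℝ} (hc : 0 < c) (r : ℝ) : Real.sign (c * r) = Real.sign r := by
  rcases lt_trichotomy r 0 with hr | rfl | hr
  · rw [Real.sign_of_neg hr, Real.sign_of_neg (mul_neg_of_pos_of_neg hc hr)]
  · rw [mul_zero]
  · rw [Real.sign_of_pos hr, Real.sign_of_pos (mul_pos hc hr)]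

lemma norm_cexp_neg_I_mul_ofReal (r : ℝ) : ‖cexp (-I * r)‖ = 1 := by
  rw [show -I * r = I * (-r : ℝ) by push_cast; ring]
  exact norm_exp_I_mul_ofReal _

lemma norm_integral_cexp_neg_I_mul_le (φ : ℝ → ℝ) (a b : ℝ) :
    ‖∫ t in a..b, cexp (-I * φ t)‖ ≤ |b - a| := by
  simpa using norm_integral_le_of_norm_le_const (C := 1) (a := a) (b := b)
    (f := fun t => cexp (-I * φ t)) fun t _ => (norm_cexp_neg_I_mul_ofReal _).le

lemma norm_integral_cexp_neg_I_mul_neg (φ : ℝ → ℝ) (a b : ℝ) :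
    ‖∫ t in a..b, cexp (-I * ↑(-φ t))‖ = ‖∫ t in a..b, cexp (-I * φ t)‖ := by
  have hconj : ∀ t, cexp (-I * ↑(-φ t)) = conj (cexp (-I * φ t)) := fun t => by
    rw [← exp_conj, map_mul, map_neg, conj_I, conj_ofReal, ofReal_neg]
    ring_nf
  simp_rw [hconj, intervalIntegral_conj, RCLike.norm_conj]

lemma norm_integral_zero_neg_cexp_neg_I_mul_of_odd {φ : ℝ → ℝ} (hφ : Function.Odd φ) (P : ℝ) :
    ‖∫ t in 0..-P, cexp (-I * φ t)‖ = ‖∫ t in 0..P, cexp (-I * φ t)‖ := by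
  have hreflect := integral_comp_neg (a := 0) (b := P) fun t => cexp (-I * φ t)
  simp only [neg_zero, show ∀ t, φ (-t) = -φ t from hφ] at hreflect
  rw [integral_symm, norm_neg, ← hreflect, norm_integral_cexp_neg_I_mul_neg]

lemma norm_integral_cexp_neg_I_mul_abs_mul (φ : ℝ → ℝ) (x a b : ℝ) :
    ‖∫ t in a..b, cexp (-I * ↑(x * φ t))‖ = ‖∫ t in a..b, cexp (-I * ↑(|x| * φ t))‖ := by
  rcases abs_choice x with h | h <;> rw [h]
  simp_rw [neg_mul x]
  exact (norm_integral_cexp_neg_I_mul_neg (fun t => x * φ t) a b).symm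

theorem norm_integral_cexp_neg_I_mul_le_of_le_deriv {φ φ' φ'' : ℝ → ℝ} {a b l : ℝ}
    (hab : a ≤ b) (hl : 0 < l)
    (hφ : ∀ t ∈ Icc a b, HasDerivAt φ (φ' t) t) (hφ' : ∀ t ∈ Icc a b, HasDerivAt φ' (φ'' t) t)
    (hφ''_nonneg : ∀ t ∈ Icc a b, 0 ≤ φ'' t) (hl_le : ∀ t ∈ Icc a b, l ≤ φ' t) :
    ‖∫ t in a..b, cexp (-I * φ t)‖ ≤ 3 / l := by
  rw [← uIcc_of_le hab] at hφ hφ' hφ''_nonneg hl_le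
  have hφ'_pos : ∀ t ∈ uIcc a b, 0 < φ' t := fun t ht => hl.trans_le (hl_le t ht)
  set g : ℝ → ℝ := fun t => -(φ' t)⁻¹
  set w : ℝ → ℝ := fun t => φ'' t / φ' t ^ 2
  have hg : ∀ t ∈ uIcc a b, HasDerivAt g (w t) t := fun t ht => by
    have := ((hφ' t ht).inv (hφ'_pos t ht).ne').neg
    rwa [neg_div, neg_neg] at this
  have hw_int : IntervalIntegrable w volume a b :=
    intervalIntegrable_deriv_of_nonneg (fun t ht => (hg t ht).continuousAt.continuousWithinAt)
      (fun t ht => hg t (Ioo_subset_Icc_self ht))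
      (fun t ht => div_nonneg (hφ''_nonneg t (Ioo_subset_Icc_self ht)) (sq_nonneg _))
  have hw_integral : ∫ t in a..b, w t = (φ' a)⁻¹ - (φ' b)⁻¹ := by
    rw [integral_eq_sub_of_hasDerivAt hg hw_int]
    ring
  set u : ℝ → ℂ := fun t => -I * g t
  set v : ℝ → ℂ := fun t => cexp (-I * φ t)
  have hu : ∀ t ∈ uIcc a b, HasDerivAt u (-I * w t) t := fun t ht =>
    (hg t ht).ofReal_comp.const_mul _
  have hv : ∀ t ∈ uIcc a b, HasDerivAt v (v t * (-I * φ' t)) t := fun t ht =>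
    ((hφ t ht).ofReal_comp.const_mul _).cexp
  have hu'_int : IntervalIntegrable (fun t => -I * w t) volume a b :=
    (show IntervalIntegrable (fun t => (w t : ℂ)) volume a b from
      ⟨hw_int.1.ofReal, hw_int.2.ofReal⟩).const_mul _
  have hv'_int : IntervalIntegrable (fun t => v t * (-I * φ' t)) volume a b := by
    refine ContinuousOn.intervalIntegrable (ContinuousOn.mul ?_ (continuousOn_const.mul ?_))
    · exact continuousOn_of_forall_continuousAt fun t ht => (hv t ht).continuousAt
    · exact continuous_ofReal.comp_continuousOn
        (continuousOn_of_forall_continuousAt fun t ht => (hφ' t ht).continuousAt)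
  have hv_eq : ∫ t in a..b, v t = ∫ t in a..b, u t * (v t * (-I * φ' t)) :=
    integral_congr fun t ht => by
      have : (φ' t : ℂ) ≠ 0 := ofReal_ne_zero.mpr (hφ'_pos t ht).ne'
      simp only [u, g, ofReal_neg, ofReal_inv]
      field_simp
      ring_nf
      simp
  have hnorm_uv : ∀ t ∈ uIcc a b, ‖u t * v t‖ ≤ l⁻¹ := fun t ht => by
    rw [norm_mul, norm_cexp_neg_I_mul_ofReal, mul_one, norm_mul, norm_neg, norm_I, one_mul,
      norm_real, Real.norm_eq_abs, abs_neg, abs_inv, abs_of_pos (hφ'_pos t ht)]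
    exact inv_anti₀ hl (hl_le t ht)
  have hnorm_int : ‖∫ t in a..b, -I * w t * v t‖ ≤ l⁻¹ :=
    calc ‖∫ t in a..b, -I * w t * v t‖ ≤ ∫ t in a..b, w t := by
          refine norm_integral_le_of_norm_le hab (ae_of_all _ fun t ht => ?_) hw_int
          have ht' : t ∈ uIcc a b := by
            rw [uIcc_of_le hab]
            exact Ioc_subset_Icc_self ht
          rw [norm_mul, norm_cexp_neg_I_mul_ofReal, mul_one, norm_mul, norm_neg, norm_I, one_mul,
            norm_real, Real.norm_of_nonneg (div_nonneg (hφ''_nonneg t ht') (sq_nonneg _))]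
      _ = (φ' a)⁻¹ - (φ' b)⁻¹ := hw_integral
      _ ≤ l⁻¹ := by
          have := inv_pos.mpr (hφ'_pos b right_mem_uIcc)
          linarith [inv_anti₀ hl (hl_le a left_mem_uIcc)]
  rw [hv_eq, integral_mul_deriv_eq_deriv_mul hu hv hu'_int hv'_int]
  calc ‖u b * v b - u a * v a - ∫ t in a..b, -I * w t * v t‖
      ≤ ‖u b * v b‖ + ‖u a * v a‖ + ‖∫ t in a..b, -I * w t * v t‖ :=
        (norm_sub_le _ _).trans (add_le_add_left (norm_sub_le _ _) _)
    _ ≤ l⁻¹ + l⁻¹ + l⁻¹ := by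
        gcongr
        exacts [hnorm_uv b right_mem_uIcc, hnorm_uv a left_mem_uIcc]
    _ = 3 / l := by ring

lemma norm_integral_cexp_neg_I_mul_rpow_le {ν Q : ℝ} (hν : 1 < ν) (hQ : 0 ≤ Q) :
    ‖∫ t in 0..Q, cexp (-I * ↑(t ^ ν))‖ ≤ 1 + 3 / ν := by
  have h3 : 0 ≤ 3 / ν := by positivity
  rcases le_or_gt Q 1 with hQ1 | hQ1
  · calc _ ≤ |Q - 0| := norm_integral_cexp_neg_I_mul_le _ 0 Q
      _ ≤ 1 + 3 / ν := by rw [sub_zero, abs_of_nonneg hQ]; linarith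
  have hcont : Continuous fun t : ℝ => cexp (-I * ↑(t ^ ν)) := by
    have := Real.continuous_rpow_const (q := ν) (by linarith)
    fun_prop
  rw [← integral_add_adjacent_intervals (b := 1) (hcont.intervalIntegrable _ _)
    (hcont.intervalIntegrable _ _)]
  have head : ‖∫ t in (0 : ℝ)..1, cexp (-I * ↑(t ^ ν))‖ ≤ 1 := by
    simpa using norm_integral_cexp_neg_I_mul_le (· ^ ν) 0 1
  have tail : ‖∫ t in (1 : ℝ)..Q, cexp (-I * ↑(t ^ ν))‖ ≤ 3 / ν := by
    refine norm_integral_cexp_neg_I_mul_le_of_le_deriv (φ' := fun t => ν * t ^ (ν - 1))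
      (φ'' := fun t => ν * ((ν - 1) * t ^ (ν - 1 - 1))) hQ1.le (by linarith)
      (fun t _ => Real.hasDerivAt_rpow_const (Or.inr hν.le))
      (fun t ht => (Real.hasDerivAt_rpow_const (Or.inl ?_)).const_mul ν)
      (fun t ht => ?_) (fun t ht => le_mul_of_one_le_right (by linarith) ?_)
    · exact (zero_lt_one.trans_le ht.1).ne'
    · have := Real.rpow_nonneg (zero_le_one.trans ht.1) (ν - 1 - 1)
      have : 0 ≤ ν - 1 := by linarith
      positivity
    · exact Real.one_le_rpow ht.1 (by linarith)
  exact (norm_add_le _ _).trans (add_le_add head tail)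

lemma norm_integral_cexp_neg_I_mul_sign_mul_rpow_le {ν : ℝ} (hν : 1 < ν) (Q : ℝ) :
    ‖∫ t in 0..Q, cexp (-I * ↑(Real.sign t * |t| ^ ν))‖ ≤ 1 + 3 / ν := by
  wlog hQ : 0 ≤ Q generalizing Q
  · have hodd : Function.Odd fun t : ℝ => Real.sign t * |t| ^ ν := fun t => by
      simp only [Real.sign_neg, abs_neg, neg_mul]
    rw [← neg_neg Q, norm_integral_zero_neg_cexp_neg_I_mul_of_odd hodd]
    exact this _ (by linarith)
  rw [integral_congr (g := fun t => cexp (-I * ↑(t ^ ν))) fun t ht => ?_]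
  · exact norm_integral_cexp_neg_I_mul_rpow_le hν hQ
  rw [uIcc_of_le hQ] at ht
  rcases ht.1.eq_or_lt with rfl | ht0
  · simp [Real.zero_rpow (by linarith : ν ≠ 0)]
  · simp [Real.sign_of_pos ht0, abs_of_pos ht0]

/-- Van der Corput type consequence: for `ν > 1`, real `x ≠ 0` and real `P`, the oscillatory
integral satisfies `|∫₀^P exp(−i x sgn(τ) |τ|^ν) dτ| ≤ 4 |x|^{−1/ν}`, uniformly in `P`. -/
theorem van_der_corput_consequence (ν x P : ℝ) (hν : 1 < ν) (hx : x ≠ 0) :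
    ‖∫ τ in (0:ℝ)..P, Complex.exp (-Complex.I * ((x * Real.sign τ * |τ| ^ ν : ℝ) : ℂ))‖
      ≤ 4 * |x| ^ (-1 / ν) := by
  have hν0 : 0 < ν := by linarith
  set c := |x| ^ ν⁻¹
  have hc : 0 < c := by positivity
  have hscale : ∀ τ, |x| * (Real.sign τ * |τ| ^ ν) = Real.sign (c * τ) * |c * τ| ^ ν := fun τ => by
    rw [Real.sign_mul_of_pos hc, abs_mul, abs_of_pos hc, Real.mul_rpow hc.le (abs_nonneg τ),
      ← Real.rpow_mul (abs_nonneg x), inv_mul_cancel₀ hν0.ne', Real.rpow_one]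
    ring
  calc ‖∫ τ in (0:ℝ)..P, cexp (-I * ↑(x * Real.sign τ * |τ| ^ ν))‖
      = c⁻¹ * ‖∫ t in (0:ℝ)..c * P, cexp (-I * ↑(Real.sign t * |t| ^ ν))‖ := by
        simp_rw [mul_assoc x]
        rw [norm_integral_cexp_neg_I_mul_abs_mul]
        simp_rw [hscale]
        rw [integral_comp_mul_left (fun t => cexp (-I * ↑(Real.sign t * |t| ^ ν))) hc.ne',
          mul_zero, norm_smul, Real.norm_of_nonneg (inv_nonneg.2 hc.le)]
    _ ≤ c⁻¹ * 4 := by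
        gcongr
        refine (norm_integral_cexp_neg_I_mul_sign_mul_rpow_le hν _).trans ?_
        have : 3 / ν ≤ 3 := div_le_self zero_le_three hν.le
        linarith
    _ = 4 * |x| ^ (-1 / ν) := by
        rw [neg_div, one_div, Real.rpow_neg (abs_nonneg x), mul_comm]
end
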